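/- arXiv:2604.13043 — 2 statements merged into one kernel-verified Lean document; each statement's English description precedes it below -/
import Mathlib

section
/- Suppose β = β_K := (1−η)^{α−1}/Γ(α) and fix b ∈ [η,1). Then with Φ(s) = β + η^{α−1}/Γ(α) and c_{2,K} = (βΓ(α) − (b−η)^{α−1})/(βΓ(α) + η^{α−1}) ∈ (0,1], one has 0 ≤ K(t,s) ≤ Φ(s) for all t,s ∈ [0,1] and K(t,s) ≥ c_{2,K}·Φ(s) for all t ∈ [0,b] and s ∈ [0,1]. -/
open Set MeasureTheory

/-- The Green's function `K(t,s) = β + ((η−s)^{α−1}/Γ(α))·χ_{[0,η]}(s) −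
((t−s)^{α−1}/Γ(α))·χ_{[0,t]}(s)`. -/
noncomputable def Kker (α η β t s : ℝ) : ℝ :=
  β + (Set.Icc (0:ℝ) η).indicator (fun x => (η - x) ^ (α - 1) / Real.Gamma α) s
    - (Set.Icc (0:ℝ) t).indicator (fun x => (t - x) ^ (α - 1) / Real.Gamma α) s

/-- The function `γ(t) = β/Γ(3−α) + η − t`. -/
noncomputable def gam (α η β t : ℝ) : ℝ := β / Real.Gamma (3 - α) + η - t

/-!
Write `K(t,s) = β − (A_t(s) − A_η(s))/Γ(α)` with `A_r(s) = (r−s)^{α−1}·χ_{[0,r]}(s)`.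
Since `x ↦ x^{α−1}` is monotone and subadditive on `[0,∞)` (as `0 ≤ α−1 ≤ 1`),
one has `A_t(s) − A_η(s) ≤ (T−η)^{α−1}` whenever `t, η ≤ T`. With `T = 1` this gives
`K ≥ 0`, because `β_K Γ(α) = (1−η)^{α−1}`; with `T = b` it gives
`K ≥ β − (b−η)^{α−1}/Γ(α) = c_{2,K}·Φ`.
The upper bound `K ≤ Φ` is just `A_η(s) ≤ η^{α−1}` and `A_t(s) ≥ 0`.
-/

noncomputable def truncPow (p r s : ℝ) : ℝ :=
  (Icc 0 r).indicator (fun x => (r - x) ^ p) s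

theorem truncPow_nonneg (p r s : ℝ) : 0 ≤ truncPow p r s :=
  indicator_nonneg (fun _ hx => Real.rpow_nonneg (sub_nonneg.2 hx.2) _) s

theorem truncPow_le_rpow {p r : ℝ} (hp : 0 ≤ p) (hr : 0 ≤ r) (s : ℝ) :
    truncPow p r s ≤ r ^ p := by
  by_cases hs : s ∈ Icc 0 r
  · rw [truncPow, indicator_of_mem hs]
    exact Real.rpow_le_rpow (by linarith [hs.2]) (by linarith [hs.1]) hp
  · rw [truncPow, indicator_of_notMem hs]
    exact Real.rpow_nonneg hr p

theorem Real.rpow_sub_rpow_le_rpow_sub {p x y : ℝ} (hx : 0 ≤ x) (hxy : x ≤ y) (hp0 : 0 ≤ p)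
    (hp1 : p ≤ 1) : y ^ p - x ^ p ≤ (y - x) ^ p := by
  have h := Real.rpow_add_le_add_rpow hx (sub_nonneg.2 hxy) hp0 hp1
  rw [add_sub_cancel] at h
  linarith

theorem truncPow_sub_truncPow_le {p t η T : ℝ} (hp0 : 0 ≤ p) (hp1 : p ≤ 1) (htT : t ≤ T)
    (hηT : η ≤ T) (s : ℝ) : truncPow p t s - truncPow p η s ≤ (T - η) ^ p := by
  have hT : 0 ≤ (T - η) ^ p := Real.rpow_nonneg (sub_nonneg.2 hηT) p
  by_cases hst : s ∉ Icc 0 t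
  · rw [truncPow, indicator_of_notMem hst]
    linarith [truncPow_nonneg p η s]
  rw [not_not] at hst
  rw [truncPow, indicator_of_mem hst]
  by_cases hsη : s ∈ Icc 0 η
  · rw [truncPow, indicator_of_mem hsη]
    rcases le_total t η with htη | hηt
    · have : (t - s) ^ p ≤ (η - s) ^ p :=
        Real.rpow_le_rpow (by linarith [hst.2]) (by linarith) hp0
      linarith
    · calc (t - s) ^ p - (η - s) ^ p ≤ (t - s - (η - s)) ^ p :=
            Real.rpow_sub_rpow_le_rpow_sub (by linarith [hsη.2]) (by linarith) hp0 hp1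
        _ ≤ (T - η) ^ p := Real.rpow_le_rpow (by linarith) (by linarith) hp0
  · have hηs : η < s := lt_of_not_ge fun h => hsη ⟨hst.1, h⟩
    rw [truncPow, indicator_of_notMem hsη, sub_zero]
    exact Real.rpow_le_rpow (by linarith [hst.2]) (by linarith) hp0

theorem Kker_eq (α η β t s : ℝ) :
    Kker α η β t s = β - (truncPow (α - 1) t s - truncPow (α - 1) η s) / Real.Gamma α := by
  simp only [Kker, truncPow, div_eq_mul_inv, indicator_mul_const]
  ring

theorem sub_rpow_div_Gamma_le_Kker {α η β t T : ℝ} (hα1 : 1 ≤ α) (hα2 : α ≤ 2)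
    (htT : t ≤ T) (hηT : η ≤ T) (s : ℝ) :
    β - (T - η) ^ (α - 1) / Real.Gamma α ≤ Kker α η β t s := by
  have hΓ : 0 < Real.Gamma α := Real.Gamma_pos_of_pos (by linarith)
  rw [Kker_eq]
  gcongr
  exact truncPow_sub_truncPow_le (by linarith) (by linarith) htT hηT s

theorem Kker_le {α η β : ℝ} (hα : 1 ≤ α) (hη : 0 ≤ η) (t s : ℝ) :
    Kker α η β t s ≤ β + η ^ (α - 1) / Real.Gamma α := by
  have hΓ : 0 < Real.Gamma α := Real.Gamma_pos_of_pos (by linarith)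
  have hA : truncPow (α - 1) η s - truncPow (α - 1) t s ≤ η ^ (α - 1) := by
    linarith [truncPow_le_rpow (p := α - 1) (by linarith) hη s, truncPow_nonneg (α - 1) t s]
  rw [Kker_eq, sub_eq_add_neg, ← neg_div, neg_sub]
  gcongr

theorem stmt_7_general (α η β : ℝ) (hα1 : 1 < α) (hα2 : α ≤ 2) (hη0 : 0 < η) (hη1 : η < 1)
    (hβK : β = (1 - η) ^ (α - 1) / Real.Gamma α)
    (b : ℝ) (hbl : η ≤ b) (hbu : b < 1)
    (Φ : ℝ → ℝ) (hΦ : ∀ s, Φ s = β + η ^ (α - 1) / Real.Gamma α)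
    (c : ℝ)
    (hc : c = (β * Real.Gamma α - (b - η) ^ (α - 1)) / (β * Real.Gamma α + η ^ (α - 1))) :
    c ∈ Set.Ioc (0:ℝ) 1 ∧
    (∀ t ∈ Set.Icc (0:ℝ) 1, ∀ s ∈ Set.Icc (0:ℝ) 1,
      0 ≤ Kker α η β t s ∧ Kker α η β t s ≤ Φ s) ∧
    (∀ t ∈ Set.Icc (0:ℝ) b, ∀ s ∈ Set.Icc (0:ℝ) 1, c * Φ s ≤ Kker α η β t s) := by
  have hΓ : 0 < Real.Gamma α := Real.Gamma_pos_of_pos (by linarith)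
  have hβΓ : β * Real.Gamma α = (1 - η) ^ (α - 1) := by
    rw [hβK, div_mul_cancel₀ _ hΓ.ne']
  have hbη : (b - η) ^ (α - 1) < (1 - η) ^ (α - 1) :=
    Real.rpow_lt_rpow (by linarith) (by linarith) (by linarith)
  have hη : 0 < η ^ (α - 1) := Real.rpow_pos_of_pos hη0 _
  have hbη0 : 0 ≤ (b - η) ^ (α - 1) := Real.rpow_nonneg (sub_nonneg.2 hbl) _
  have hden : 0 < β * Real.Gamma α + η ^ (α - 1) := by linarith
  have hcΦ : ∀ s, c * Φ s = β - (b - η) ^ (α - 1) / Real.Gamma α := by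
    intro s
    rw [hc, hΦ]
    field_simp
  refine ⟨⟨?_, ?_⟩, fun t ht s _ => ⟨?_, ?_⟩, fun t ht s _ => ?_⟩
  · rw [hc]
    exact div_pos (by linarith) hden
  · rw [hc, div_le_one hden]
    linarith
  · calc 0 = β - (1 - η) ^ (α - 1) / Real.Gamma α := by rw [hβK, sub_self]
      _ ≤ Kker α η β t s := sub_rpow_div_Gamma_le_Kker hα1.le hα2 ht.2 hη1.le s
  · exact hΦ s ▸ Kker_le hα1.le hη0.le t s
  · exact hcΦ s ▸ sub_rpow_div_Gamma_le_Kker hα1.le hα2 ht.2 hbl s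

/-- if `β = β_K` and `b ∈ [η,1)`, then with `Φ(s) = β + η^{α−1}/Γ(α)` and
`c_{2,K} = (βΓ(α) − (b−η)^{α−1})/(βΓ(α) + η^{α−1}) ∈ (0,1]`, one has
`0 ≤ K(t,s) ≤ Φ(s)` for all `t, s ∈ [0,1]` and `K(t,s) ≥ c_{2,K}·Φ(s)` for all
`t ∈ [0,b]`, `s ∈ [0,1]`. -/
theorem stmt_7 (α η β : ℝ) (hα1 : 1 < α) (hα2 : α ≤ 2) (hη0 : 0 < η) (hη1 : η < 1)
    (hβ : 0 < β) (hβK : β = (1 - η) ^ (α - 1) / Real.Gamma α)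
    (b : ℝ) (hbl : η ≤ b) (hbu : b < 1)
    (Φ : ℝ → ℝ) (hΦ : ∀ s, Φ s = β + η ^ (α - 1) / Real.Gamma α)
    (c : ℝ)
    (hc : c = (β * Real.Gamma α - (b - η) ^ (α - 1)) / (β * Real.Gamma α + η ^ (α - 1))) :
    c ∈ Set.Ioc (0:ℝ) 1 ∧
    (∀ t ∈ Set.Icc (0:ℝ) 1, ∀ s ∈ Set.Icc (0:ℝ) 1,
      0 ≤ Kker α η β t s ∧ Kker α η β t s ≤ Φ s) ∧
    (∀ t ∈ Set.Icc (0:ℝ) b, ∀ s ∈ Set.Icc (0:ℝ) 1, c * Φ s ≤ Kker α η β t s) :=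
  stmt_7_general α η β hα1 hα2 hη0 hη1 hβK b hbl hbu Φ hΦ c hc
end

section
/- (Monotonicity of Tu) Suppose β ≥ max{β_K, β_γ}. Then for every u ∈ C([0,1],ℝ), the function T(u) is nonnegative and nonincreasing on [0,1]; in particular ‖T(u)‖_∞ = T(u)(0). -/
open Set MeasureTheory

/-- `C([0,1],ℝ)` with the supremum norm. -/
abbrev CI := ContinuousMap (Set.Icc (0:ℝ) 1) ℝ

/-!
Each summand of `T u` is nonnegative and nonincreasing in `t`: `γ` is affine with slope `-1`
and `γ(1) ≥ 0` because `β ≥ β_γ`; `K(·, s)` is nonincreasing since `t ↦ (t - s)₊^{α-1}` is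
nondecreasing, and `K ≥ 0` because `β ≥ β_K`. Writing the indicators as truncated powers makes
`K(t, ·)` continuous, so the integrals can be compared.
-/

theorem ContinuousMap.norm_eq_of_nonneg_of_le {X : Type*} [TopologicalSpace X] [CompactSpace X]
    (g : C(X, ℝ)) {x₀ : X} (hg : ∀ x, 0 ≤ g x) (hx₀ : ∀ x, g x ≤ g x₀) : ‖g‖ = g x₀ := by
  refine le_antisymm ((g.norm_le (hg x₀)).2 fun x => ?_) ?_
  · rw [Real.norm_of_nonneg (hg x)]
    exact hx₀ x
  · simpa [Real.norm_of_nonneg (hg x₀)] using g.norm_coe_le_norm x₀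

theorem indicator_Icc_zero_rpow_sub {c s p : ℝ} (d : ℝ) (hp : 0 < p) (hs : 0 ≤ s) :
    (Icc 0 c).indicator (fun x => (c - x) ^ p / d) s = max (c - s) 0 ^ p / d := by
  by_cases h : s ≤ c
  · rw [indicator_of_mem (show s ∈ Icc 0 c from ⟨hs, h⟩), max_eq_left (sub_nonneg.2 h)]
  · rw [indicator_of_notMem fun hm => h hm.2, max_eq_right (by linarith),
      Real.zero_rpow hp.ne', zero_div]

section Kernel

variable {α η β : ℝ}

theorem Kker_eq_of_nonneg (hα1 : 1 < α) {t s : ℝ} (hs : 0 ≤ s) :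
    Kker α η β t s =
      β + max (η - s) 0 ^ (α - 1) / Real.Gamma α - max (t - s) 0 ^ (α - 1) / Real.Gamma α := by
  rw [Kker, indicator_Icc_zero_rpow_sub _ (sub_pos.2 hα1) hs,
    indicator_Icc_zero_rpow_sub _ (sub_pos.2 hα1) hs]

theorem continuousOn_Kker (hα1 : 1 < α) (t : ℝ) : ContinuousOn (Kker α η β t) (Ici 0) := by
  refine ContinuousOn.congr ?_ fun s hs => Kker_eq_of_nonneg hα1 hs
  have hpow (c : ℝ) : Continuous fun s : ℝ => max (c - s) 0 ^ (α - 1) / Real.Gamma α :=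
    ((Real.continuous_rpow_const (by linarith)).comp
      ((continuous_const.sub continuous_id).max continuous_const)).div_const _
  exact ((continuous_const.add (hpow η)).sub (hpow t)).continuousOn

theorem Kker_antitone (hα1 : 1 < α) {t₁ t₂ s : ℝ} (hs : 0 ≤ s) (ht : t₁ ≤ t₂) :
    Kker α η β t₂ s ≤ Kker α η β t₁ s := by
  have hΓ : 0 < Real.Gamma α := Real.Gamma_pos_of_pos (by linarith)
  rw [Kker_eq_of_nonneg hα1 hs, Kker_eq_of_nonneg hα1 hs]
  have : max (t₁ - s) 0 ^ (α - 1) ≤ max (t₂ - s) 0 ^ (α - 1) :=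
    Real.rpow_le_rpow (le_max_right _ _) (max_le_max_right 0 (by linarith)) (by linarith)
  gcongr

/-- `(t−s)₊^{α−1} ≤ (η−s)₊^{α−1} + (1−η)^{α−1}` by subadditivity of `x ↦ x^{α−1}` (as
`α − 1 ≤ 1`), and `β ≥ β_K` absorbs the last term. -/
theorem Kker_nonneg (hα1 : 1 < α) (hα2 : α ≤ 2) (hη1 : η < 1)
    (hβK : (1 - η) ^ (α - 1) / Real.Gamma α ≤ β) {t s : ℝ} (ht : t ≤ 1) (hs : 0 ≤ s) :
    0 ≤ Kker α η β t s := by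
  have hΓ : 0 < Real.Gamma α := Real.Gamma_pos_of_pos (by linarith)
  have hb : 0 ≤ max (η - s) 0 := le_max_right _ _
  have hle : max (t - s) 0 ≤ max (η - s) 0 + (1 - η) :=
    max_le (by linarith [le_max_left (η - s) 0]) (by linarith)
  have hpow : max (t - s) 0 ^ (α - 1) ≤ max (η - s) 0 ^ (α - 1) + (1 - η) ^ (α - 1) :=
    calc max (t - s) 0 ^ (α - 1) ≤ (max (η - s) 0 + (1 - η)) ^ (α - 1) :=
          Real.rpow_le_rpow (le_max_right _ _) hle (by linarith)
      _ ≤ _ := Real.rpow_add_le_add_rpow hb (by linarith) (by linarith) (by linarith)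
  have : max (t - s) 0 ^ (α - 1) / Real.Gamma α ≤
      max (η - s) 0 ^ (α - 1) / Real.Gamma α + (1 - η) ^ (α - 1) / Real.Gamma α := by
    rw [← add_div]
    gcongr
  rw [Kker_eq_of_nonneg hα1 hs]
  linarith

theorem integral_Kker_mul_antitone (hα1 : 1 < α) {w : ℝ → ℝ} (hw : ContinuousOn w (Icc 0 1))
    (hw0 : ∀ s ∈ Icc (0:ℝ) 1, 0 ≤ w s) {t₁ t₂ : ℝ} (ht : t₁ ≤ t₂) :
    ∫ s in (0:ℝ)..1, Kker α η β t₂ s * w s ≤ ∫ s in (0:ℝ)..1, Kker α η β t₁ s * w s := by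
  have hint : ∀ t, IntervalIntegrable (fun s => Kker α η β t s * w s) volume 0 1 := fun t =>
    (((continuousOn_Kker hα1 t).mono fun _ hs => hs.1).mul hw).intervalIntegrable_of_Icc
      zero_le_one
  exact intervalIntegral.integral_mono_on zero_le_one (hint t₂) (hint t₁) fun s hs =>
    mul_le_mul_of_nonneg_right (Kker_antitone hα1 hs.1 ht) (hw0 s hs)

theorem gam_nonneg (hα2 : α ≤ 2) (hβγ : (1 - η) * Real.Gamma (3 - α) ≤ β) {t : ℝ}
    (ht : t ≤ 1) : 0 ≤ gam α η β t := by
  have hΓ : 0 < Real.Gamma (3 - α) := Real.Gamma_pos_of_pos (by linarith)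
  have : 1 - η ≤ β / Real.Gamma (3 - α) := (le_div_iff₀ hΓ).2 hβγ
  rw [gam]
  linarith

end Kernel

/-- Monotonicity of `Tu`: if `β ≥ max{β_K, β_γ}` then for every
`u ∈ C([0,1],ℝ)` the function `T(u)` is nonnegative and nonincreasing on `[0,1]`;
in particular `‖T(u)‖_∞ = T(u)(0)`. -/
theorem stmt_14
    (α η β : ℝ) (hα1 : 1 < α) (hα2 : α ≤ 2) (hη1 : η < 1)
    (f : ℝ → ℝ → ℝ)
    (hf : ContinuousOn (fun p : ℝ × ℝ => f p.1 p.2) (Set.Icc (0:ℝ) 1 ×ˢ Set.univ))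
    (hf0 : ∀ t ∈ Set.Icc (0:ℝ) 1, ∀ x : ℝ, 0 ≤ f t x)
    (H₁ H₂ : CI → ℝ)
    (hH₁0 : ∀ u, 0 ≤ H₁ u) (hH₂0 : ∀ u, 0 ≤ H₂ u)
    (T : CI → CI)
    (hT : ∀ (u : CI) (t : Set.Icc (0:ℝ) 1), T u t = H₁ u * gam α η β (t : ℝ) + H₂ u +
      ∫ s in (0:ℝ)..1, Kker α η β (t : ℝ) s * f s (Set.IccExtend zero_le_one u s))
    (hβ : max ((1 - η) ^ (α - 1) / Real.Gamma α) ((1 - η) * Real.Gamma (3 - α)) ≤ β) :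
    ∀ u : CI, (∀ t, 0 ≤ T u t) ∧
      (∀ t₁ t₂ : Set.Icc (0:ℝ) 1, (t₁ : ℝ) ≤ (t₂ : ℝ) → T u t₂ ≤ T u t₁) ∧
      ‖T u‖ = T u ⟨0, by norm_num⟩ := by
  intro u
  obtain ⟨hβK, hβγ⟩ := max_le_iff.1 hβ
  have hw : ContinuousOn (fun s => f s (IccExtend zero_le_one u s)) (Icc 0 1) :=
    hf.comp (continuous_id.prodMk u.continuous.Icc_extend').continuousOn
      fun s hs => ⟨hs, mem_univ _⟩
  have hw0 : ∀ s ∈ Icc (0:ℝ) 1, 0 ≤ f s (IccExtend zero_le_one u s) := fun s hs => hf0 s hs _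
  have hpos : ∀ t, 0 ≤ T u t := fun t => by
    rw [hT]
    have : 0 ≤ ∫ s in (0:ℝ)..1, Kker α η β t s * f s (IccExtend zero_le_one u s) :=
      intervalIntegral.integral_nonneg zero_le_one fun s hs =>
        mul_nonneg (Kker_nonneg hα1 hα2 hη1 hβK t.2.2 hs.1) (hw0 s hs)
    have := mul_nonneg (hH₁0 u) (gam_nonneg hα2 hβγ t.2.2)
    linarith [hH₂0 u]
  have hanti : ∀ t₁ t₂ : Icc (0:ℝ) 1, (t₁ : ℝ) ≤ t₂ → T u t₂ ≤ T u t₁ := fun t₁ t₂ ht => by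
    rw [hT, hT]
    have := integral_Kker_mul_antitone (η := η) (β := β) hα1 hw hw0 ht
    have : H₁ u * gam α η β t₂ ≤ H₁ u * gam α η β t₁ :=
      mul_le_mul_of_nonneg_left (by rw [gam, gam]; linarith) (hH₁0 u)
    linarith
  exact ⟨hpos, hanti, (T u).norm_eq_of_nonneg_of_le hpos fun t => hanti _ t t.2.1⟩
end
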